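/- Let β_A, β_H > 0 and α_A, α_H > 0 with α_H·β_A − α_A·β_H ≠ 0. Then for every initial size ω₀ ≥ 1 and every horizon n ≥ 1, the relative entropy satisfies I_n ≤ E_n^U, where: if β_A ≠ 1, E_n^U := ((β_A·(log(β_A/β_H) − 1) + β_H)/(1 − β_A))·(ω₀ − α_A/(1 − β_A))·(1 − β_A^n) + [ α_A·(β_A·(log(β_A/β_H) − 1) + β_H)/(β_A·(1 − β_A)) + α_A·(log(α_A·β_H/(α_H·β_A)) − β_H/β_A) + α_H ]·n; if β_A = 1, E_n^U := (β_H − log β_H − 1)·( (α_A/2)·n² + (ω₀ + α_A/2)·n ) + [ α_A·(log(α_A·β_H/α_H) − β_H) + α_H ]·n. -/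

import Mathlib

open Real Filter

/-- One transition weight of the Poisson Galton–Watson process with immigration:
probability that the next generation size is `y` given the previous size is `x`. -/
noncomputable def gwStep (β α : ℝ) (x y : ℕ) : ℝ :=
  Real.exp (-(β * (x : ℝ) + α)) * (β * (x : ℝ) + α) ^ y / (Nat.factorial y : ℝ)

/-- The `n`-step path law (pmf on `Fin n → ℕ`) with initial generation size `ω₀`. -/
noncomputable def gwPath (β α : ℝ) (ω₀ n : ℕ) (ω : Fin n → ℕ) : ℝ :=
  ∏ k : Fin n,
    gwStep β α
      (if (k : ℕ) = 0 then ω₀ else ω ⟨(k : ℕ) - 1, Nat.lt_of_le_of_lt (Nat.sub_le _ _) k.2⟩)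
      (ω k)

/-- Relative entropy between the `n`-step path laws (summands with vanishing
`p_A` contribute `0`, since they are multiplied by `p_A`). -/
noncomputable def relEnt (βA αA βH αH : ℝ) (ω₀ n : ℕ) : ℝ :=
  ∑' ω : Fin n → ℕ,
    gwPath βA αA ω₀ n ω * Real.log (gwPath βA αA ω₀ n ω / gwPath βH αH ω₀ n ω)

open InformationTheory

/-! Along a path the log-likelihood ratio splits into the ratio of the first Poisson transition
plus the ratio of the remaining path, so the relative entropy satisfies the chain rule
`I_{n+1}(x) = KL(Poi λ_A(x) ‖ Poi λ_H(x)) + E[I_n(ω₁)]` with `λ_•(x) = β_• x + α_•`.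
The Poisson divergence is `λ_H · klFun (λ_A / λ_H)`, and since the perspective of the convex
function `klFun` is subadditive it is at most `C x + D`, where `C = β_H klFun (β_A / β_H)` and
`D = α_H klFun (α_A / α_H)`. Hence `I_n(x) ≤ C ∑_{k<n} E[ω_k] + D n`, and the generation means
`β^k x + α ∑_{j<k} β^j` give the closed forms. The summability needed for Fubini is carried along
the same induction: `p |log (p / q)| ≤ p log (p / q) + 2 q` turns the upper bound on `I_n` into
absolute summability. -/

theorem ConvexOn.mul_div_add_le {f : ℝ → ℝ} (hf : ConvexOn ℝ (Set.Ici 0) f) {a₁ a₂ b₁ b₂ : ℝ}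
    (ha₁ : 0 ≤ a₁) (ha₂ : 0 ≤ a₂) (hb₁ : 0 < b₁) (hb₂ : 0 < b₂) :
    (b₁ + b₂) * f ((a₁ + a₂) / (b₁ + b₂)) ≤ b₁ * f (a₁ / b₁) + b₂ * f (a₂ / b₂) := by
  have hb : 0 < b₁ + b₂ := add_pos hb₁ hb₂
  have h := hf.2 (Set.mem_Ici.2 (div_nonneg ha₁ hb₁.le)) (Set.mem_Ici.2 (div_nonneg ha₂ hb₂.le))
    (div_nonneg hb₁.le hb.le) (div_nonneg hb₂.le hb.le) (by field_simp)
  have hmean :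
      b₁ / (b₁ + b₂) * (a₁ / b₁) + b₂ / (b₁ + b₂) * (a₂ / b₂) = (a₁ + a₂) / (b₁ + b₂) := by
    field_simp
  simp only [smul_eq_mul, hmean] at h
  calc (b₁ + b₂) * f ((a₁ + a₂) / (b₁ + b₂))
      ≤ (b₁ + b₂) * (b₁ / (b₁ + b₂) * f (a₁ / b₁) + b₂ / (b₁ + b₂) * f (a₂ / b₂)) :=
        mul_le_mul_of_nonneg_left h hb.le
    _ = b₁ * f (a₁ / b₁) + b₂ * f (a₂ / b₂) := by field_simp

lemma mul_klFun_div {a b : ℝ} (hb : b ≠ 0) : b * klFun (a / b) = a * log (a / b) + b - a := by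
  rw [klFun_apply]
  field_simp

lemma mul_klFun_affine_div_le {βA αA βH αH x : ℝ} (hβA : 0 ≤ βA) (hαA : 0 ≤ αA)
    (hβH : 0 < βH) (hαH : 0 < αH) (hx : 0 ≤ x) :
    (βH * x + αH) * klFun ((βA * x + αA) / (βH * x + αH)) ≤
      βH * klFun (βA / βH) * x + αH * klFun (αA / αH) := by
  rcases hx.eq_or_lt with rfl | hx
  · simp
  have h := convexOn_klFun.mul_div_add_le (mul_nonneg hβA hx.le) hαA (mul_pos hβH hx) hαH
  rwa [mul_div_mul_right _ _ hx.ne', mul_right_comm] at h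

lemma mul_abs_log_div_le {p q : ℝ} (hp : 0 < p) (hq : 0 < q) :
    p * |log (p / q)| ≤ p * log (p / q) + 2 * q := by
  rcases le_total 0 (log (p / q)) with h | h
  · rw [abs_of_nonneg h]; linarith
  · have hlog : -log (p / q) ≤ q / p - 1 := by
      rw [← log_inv, inv_div]; exact log_le_sub_one_of_pos (div_pos hq hp)
    have : p * -log (p / q) ≤ q - p := by
      calc p * -log (p / q) ≤ p * (q / p - 1) := mul_le_mul_of_nonneg_left hlog hp.le
        _ = q - p := by field_simp
    rw [abs_of_nonpos h]; linarith

lemma summable_prod_mul_of_nonneg {ι κ : Type*} {s : ι → ℝ} {g : ι → κ → ℝ} (hs : ∀ i, 0 ≤ s i)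
    (hg : ∀ i k, 0 ≤ g i k) (hgs : ∀ i, Summable (g i)) (h : Summable fun i ↦ s i * ∑' k, g i k) :
    Summable fun p : ι × κ ↦ s p.1 * g p.1 p.2 :=
  (summable_prod_of_nonneg (f := fun p : ι × κ ↦ s p.1 * g p.1 p.2)
    fun p ↦ mul_nonneg (hs p.1) (hg p.1 p.2)).2
    ⟨fun i ↦ (hgs i).mul_left (s i), h.congr fun _ ↦ tsum_mul_left.symm⟩

/-- The Poisson distribution with a real rate; `gwStep β α x` is `poissonWeight (β * x + α)`
by definition. -/
noncomputable def poissonWeight (r : ℝ) (n : ℕ) : ℝ := exp (-r) * r ^ n / n.factorial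

section Poisson

variable {r s : ℝ}

lemma hasSum_poissonWeight (r : ℝ) : HasSum (poissonWeight r) 1 := by
  have h := (NormedSpace.expSeries_div_hasSum_exp r).mul_left (exp (-r))
  rw [← exp_eq_exp_ℝ, ← exp_add, neg_add_cancel, exp_zero] at h
  exact h.congr_fun fun n ↦ mul_div_assoc _ _ _

lemma poissonWeight_pos (hr : 0 < r) (n : ℕ) : 0 < poissonWeight r n := by
  unfold poissonWeight; positivity

lemma poissonWeight_succ_mul (r : ℝ) (n : ℕ) :
    poissonWeight r (n + 1) * (n + 1) = r * poissonWeight r n := by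
  simp only [poissonWeight, Nat.factorial_succ, Nat.cast_mul, pow_succ]
  field_simp
  push_cast
  ring

lemma hasSum_poissonWeight_mul_self (r : ℝ) : HasSum (fun n ↦ poissonWeight r n * n) r := by
  rw [← hasSum_nat_add_iff' 1]
  simpa [poissonWeight_succ_mul] using (hasSum_poissonWeight r).mul_left r

lemma log_poissonWeight_div (hr : 0 < r) (hs : 0 < s) (n : ℕ) :
    log (poissonWeight r n / poissonWeight s n) = s - r + n * log (r / s) := by
  rw [poissonWeight, poissonWeight, div_div_div_cancel_right₀ (by positivity),
    mul_div_mul_comm, log_mul (by positivity) (by positivity), ← div_pow,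
    ← exp_sub, log_exp, log_pow]
  ring

lemma hasSum_poissonWeight_mul_log_div (hr : 0 < r) (hs : 0 < s) :
    HasSum (fun n ↦ poissonWeight r n * log (poissonWeight r n / poissonWeight s n))
      (s * klFun (r / s)) := by
  have h := ((hasSum_poissonWeight r).mul_left (s - r)).add
    ((hasSum_poissonWeight_mul_self r).mul_left (log (r / s)))
  rw [show (s - r) * 1 + log (r / s) * r = s * klFun (r / s) by
    rw [klFun_apply]; field_simp; ring] at h
  exact h.congr_fun fun n ↦ by rw [log_poissonWeight_div hr hs]; ring

end Poisson

lemma hasSum_gwStep (β α : ℝ) (x : ℕ) : HasSum (gwStep β α x) 1 :=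
  hasSum_poissonWeight _

lemma hasSum_gwStep_mul_self (β α : ℝ) (x : ℕ) : HasSum (fun y ↦ gwStep β α x y * y) (β * x + α) :=
  hasSum_poissonWeight_mul_self _

lemma gwPath_cons (β α : ℝ) (x n y : ℕ) (ω : Fin n → ℕ) :
    gwPath β α x (n + 1) (Fin.cons y ω) = gwStep β α x y * gwPath β α y n ω := by
  rw [gwPath, Fin.prod_univ_succ]
  congr 1
  refine Finset.prod_congr rfl fun i _ ↦ ?_
  rcases i with ⟨_ | j, hj⟩
  · rfl
  · exact congrArg₂ _ (Fin.cons_succ (α := fun _ ↦ ℕ) y ω ⟨j, by omega⟩) rfl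

section Path

variable {β α : ℝ} (hβ : 0 ≤ β) (hα : 0 < α)
include hβ hα

lemma gwStep_pos (x y : ℕ) : 0 < gwStep β α x y :=
  poissonWeight_pos (by positivity) y

lemma gwPath_pos (x n : ℕ) (ω : Fin n → ℕ) : 0 < gwPath β α x n ω :=
  Finset.prod_pos fun _ _ ↦ gwStep_pos hβ hα _ _

lemma hasSum_gwPath (n x : ℕ) : HasSum (gwPath β α x n) 1 := by
  induction n generalizing x with
  | zero =>
    convert hasSum_fintype (gwPath β α x 0)
    simp [gwPath]
  | succ n ih =>
    rw [← (Fin.consEquiv fun _ ↦ ℕ).hasSum_iff]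
    have h := summable_prod_mul_of_nonneg (fun y ↦ (gwStep_pos hβ hα x y).le)
      (fun y ω ↦ (gwPath_pos hβ hα y n ω).le) (fun y ↦ (ih y).summable)
      (by simpa only [(ih _).tsum_eq, mul_one] using (hasSum_gwStep β α x).summable)
    refine (h.hasSum_iff.2 ?_).congr_fun fun p ↦ gwPath_cons β α x n p.1 p.2
    rw [h.tsum_prod]
    simpa only [tsum_mul_left, (ih _).tsum_eq, mul_one] using (hasSum_gwStep β α x).tsum_eq

end Path

noncomputable def relEntTerm (βA αA βH αH : ℝ) (x n : ℕ) (ω : Fin n → ℕ) : ℝ :=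
  gwPath βA αA x n ω * log (gwPath βA αA x n ω / gwPath βH αH x n ω)

section RelEnt

variable {βA αA βH αH : ℝ} (hβA : 0 ≤ βA) (hαA : 0 < αA) (hβH : 0 ≤ βH) (hαH : 0 < αH)
include hβA hαA hβH hαH

lemma hasSum_gwStep_mul_log_div (x : ℕ) :
    HasSum (fun y ↦ gwStep βA αA x y * log (gwStep βA αA x y / gwStep βH αH x y))
      ((βH * x + αH) * klFun ((βA * x + αA) / (βH * x + αH))) :=
  hasSum_poissonWeight_mul_log_div (by positivity) (by positivity)

lemma relEntTerm_cons (x n y : ℕ) (ω : Fin n → ℕ) :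
    relEntTerm βA αA βH αH x (n + 1) (Fin.cons y ω) = gwStep βA αA x y *
      (log (gwStep βA αA x y / gwStep βH αH x y) * gwPath βA αA y n ω +
        relEntTerm βA αA βH αH y n ω) := by
  have hs := gwStep_pos hβA hαA x y
  have hs' := gwStep_pos hβH hαH x y
  have hp := gwPath_pos hβA hαA y n ω
  have hp' := gwPath_pos hβH hαH y n ω
  rw [relEntTerm, relEntTerm, gwPath_cons, gwPath_cons, mul_div_mul_comm,
    log_mul (by positivity) (by positivity)]
  ring

omit hβH hαH in
lemma summable_mul_abs_log_div_gwPath {n y : ℕ} (h : Summable (relEntTerm βA αA βH αH y n)) :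
    Summable (fun ω ↦ gwPath βA αA y n ω * |log (gwPath βA αA y n ω / gwPath βH αH y n ω)|) :=
  h.abs.congr fun ω ↦ by rw [relEntTerm, abs_mul, abs_of_pos (gwPath_pos hβA hαA y n ω)]

lemma tsum_mul_abs_log_div_gwPath_le {n y : ℕ} (h : Summable (relEntTerm βA αA βH αH y n)) :
    ∑' ω, gwPath βA αA y n ω * |log (gwPath βA αA y n ω / gwPath βH αH y n ω)| ≤
      relEnt βA αA βH αH y n + 2 := by
  have hq := (hasSum_gwPath hβH hαH n y).mul_left 2
  rw [mul_one] at hq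
  exact ((summable_mul_abs_log_div_gwPath hβA hαA h).tsum_le_tsum
    (fun ω ↦ mul_abs_log_div_le (gwPath_pos hβA hαA y n ω) (gwPath_pos hβH hαH y n ω))
    (h.add hq.summable)).trans_eq (h.hasSum.add hq).tsum_eq

end RelEnt

section ChainRule

variable {βA αA βH αH : ℝ} (hβA : 0 ≤ βA) (hαA : 0 < αA) (hβH : 0 ≤ βH) (hαH : 0 < αH)
  {n x : ℕ} {g : ℕ → ℝ} (hsum : ∀ y, Summable (relEntTerm βA αA βH αH y n))
  (hbd : ∀ y, relEnt βA αA βH αH y n ≤ g y) (hg : Summable fun y ↦ gwStep βA αA x y * g y)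
include hβA hαA hβH hαH hsum hbd hg

lemma summable_relEntTerm_cons :
    Summable fun p : ℕ × (Fin n → ℕ) ↦ relEntTerm βA αA βH αH x (n + 1) (Fin.cons p.1 p.2) := by
  have hs y := gwStep_pos hβA hαA x y
  have hp y ω := gwPath_pos hβA hαA y n ω
  have hstep := summable_prod_mul_of_nonneg (s := gwStep βA αA x)
    (g := fun y ω ↦ |log (gwStep βA αA x y / gwStep βH αH x y)| * gwPath βA αA y n ω)
    (fun y ↦ (hs y).le) (fun y ω ↦ mul_nonneg (abs_nonneg _) (hp y ω).le)
    (fun y ↦ (hasSum_gwPath hβA hαA n y).summable.mul_left _)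
    ((hasSum_gwStep_mul_log_div hβA hαA hβH hαH x).summable.abs.congr fun y ↦ by
      rw [tsum_mul_left, (hasSum_gwPath hβA hαA n y).tsum_eq, mul_one, abs_mul, abs_of_pos (hs y)])
  have hpath := summable_prod_mul_of_nonneg (s := gwStep βA αA x)
    (g := fun y ω ↦ gwPath βA αA y n ω * |log (gwPath βA αA y n ω / gwPath βH αH y n ω)|)
    (fun y ↦ (hs y).le) (fun y ω ↦ mul_nonneg (hp y ω).le (abs_nonneg _))
    (fun y ↦ summable_mul_abs_log_div_gwPath hβA hαA (hsum y))
    (Summable.of_nonneg_of_le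
      (fun y ↦ mul_nonneg (hs y).le (tsum_nonneg fun ω ↦ mul_nonneg (hp y ω).le (abs_nonneg _)))
      (fun y ↦ mul_le_mul_of_nonneg_left ((tsum_mul_abs_log_div_gwPath_le hβA hαA hβH hαH
        (hsum y)).trans (by linarith [hbd y])) (hs y).le)
      ((hg.add ((hasSum_gwStep βA αA x).summable.mul_right 2)).congr fun y ↦ (mul_add _ _ _).symm))
  refine Summable.of_norm_bounded (hstep.add hpath) fun p ↦ ?_
  rw [relEntTerm_cons hβA hαA hβH hαH, relEntTerm, Real.norm_eq_abs, abs_mul, abs_of_pos (hs _),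
    ← mul_add]
  refine mul_le_mul_of_nonneg_left ((abs_add_le _ _).trans_eq ?_) (hs _).le
  rw [abs_mul, abs_mul, abs_of_pos (hp _ _)]

lemma hasSum_gwStep_mul_relEnt :
    HasSum (fun y ↦ gwStep βA αA x y * relEnt βA αA βH αH y n)
      (relEnt βA αA βH αH x (n + 1) - (βH * x + αH) * klFun ((βA * x + αA) / (βH * x + αH))) := by
  have hfiber (y : ℕ) : HasSum (fun ω ↦ relEntTerm βA αA βH αH x (n + 1) (Fin.cons y ω))
      (gwStep βA αA x y * log (gwStep βA αA x y / gwStep βH αH x y) +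
        gwStep βA αA x y * relEnt βA αA βH αH y n) := by
    have h := (((hasSum_gwPath hβA hαA n y).mul_left
      (log (gwStep βA αA x y / gwStep βH αH x y))).add (hsum y).hasSum).mul_left (gwStep βA αA x y)
    rw [mul_one, mul_add] at h
    exact h.congr_fun fun ω ↦ relEntTerm_cons hβA hαA hβH hαH x n y ω
  have htotal := (summable_relEntTerm_cons hβA hαA hβH hαH hsum hbd hg).hasSum.prod_fiberwise hfiber
  have hpaths : ∑' p : ℕ × (Fin n → ℕ), relEntTerm βA αA βH αH x (n + 1) (Fin.cons p.1 p.2) =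
      relEnt βA αA βH αH x (n + 1) :=
    (Fin.consEquiv fun _ ↦ ℕ).tsum_eq (relEntTerm βA αA βH αH x (n + 1))
  rw [hpaths] at htotal
  exact (htotal.sub (hasSum_gwStep_mul_log_div hβA hαA hβH hαH x)).congr_fun fun y ↦
    (add_sub_cancel_left _ _).symm

end ChainRule

/-- The expected size of generation `k` of the process started from `x`. -/
noncomputable def gwMean (β α x : ℝ) (k : ℕ) : ℝ := β ^ k * x + α * ∑ j ∈ Finset.range k, β ^ j

lemma gwMean_succ (β α x : ℝ) (k : ℕ) : gwMean β α x (k + 1) = gwMean β α (β * x + α) k := by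
  rw [gwMean, gwMean, Finset.sum_range_succ]
  ring

lemma sum_range_succ_gwMean (β α x : ℝ) (n : ℕ) :
    ∑ k ∈ Finset.range (n + 1), gwMean β α x k =
      x + ∑ k ∈ Finset.range n, gwMean β α (β * x + α) k := by
  simp only [Finset.sum_range_succ', gwMean_succ]
  rw [add_comm, gwMean, pow_zero, Finset.sum_range_zero]
  ring

lemma hasSum_gwStep_mul_sum_gwMean (β α : ℝ) (x n : ℕ) :
    HasSum (fun y ↦ gwStep β α x y * ∑ k ∈ Finset.range n, gwMean β α y k)
      (∑ k ∈ Finset.range n, gwMean β α (β * x + α) k) := by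
  simp only [Finset.mul_sum]
  refine hasSum_sum fun k _ ↦ ?_
  have h := ((hasSum_gwStep_mul_self β α x).mul_left (β ^ k)).add
    ((hasSum_gwStep β α x).mul_left (α * ∑ j ∈ Finset.range k, β ^ j))
  rw [mul_one] at h
  exact h.congr_fun fun y ↦ by rw [gwMean]; ring

theorem relEnt_le_sum_gwMean {βA αA βH αH : ℝ} (hβA : 0 ≤ βA) (hαA : 0 < αA) (hβH : 0 < βH)
    (hαH : 0 < αH) (n x : ℕ) :
    Summable (relEntTerm βA αA βH αH x n) ∧ relEnt βA αA βH αH x n ≤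
      βH * klFun (βA / βH) * ∑ k ∈ Finset.range n, gwMean βA αA x k +
        αH * klFun (αA / αH) * n := by
  set C := βH * klFun (βA / βH)
  set D := αH * klFun (αA / αH)
  induction n generalizing x with
  | zero => exact ⟨Summable.of_finite, by simp [relEnt, gwPath]⟩
  | succ n ih =>
    set bound := fun y : ℕ ↦ C * ∑ k ∈ Finset.range n, gwMean βA αA y k + D * n
    have hbound : HasSum (fun y ↦ gwStep βA αA x y * bound y)
        (C * ∑ k ∈ Finset.range n, gwMean βA αA (βA * x + αA) k + D * n) := by
      have h := ((hasSum_gwStep_mul_sum_gwMean βA αA x n).mul_left C).add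
        ((hasSum_gwStep βA αA x).mul_left (D * n))
      rw [mul_one] at h
      exact h.congr_fun fun y ↦ by ring
    have hsum y := (ih y).1
    have hbd y : relEnt βA αA βH αH y n ≤ bound y := (ih y).2
    refine ⟨(Fin.consEquiv fun _ ↦ ℕ).summable_iff.1
      (summable_relEntTerm_cons hβA hαA hβH.le hαH hsum hbd hbound.summable), ?_⟩
    have hstep := mul_klFun_affine_div_le hβA hαA.le hβH hαH (Nat.cast_nonneg (α := ℝ) x)
    have hrest := hasSum_le (fun y ↦ mul_le_mul_of_nonneg_left (hbd y) (gwStep_pos hβA hαA x y).le)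
      (hasSum_gwStep_mul_relEnt hβA hαA hβH.le hαH hsum hbd hbound.summable) hbound
    rw [sum_range_succ_gwMean]
    push_cast
    linarith

lemma sum_range_gwMean_of_ne_one {β : ℝ} (hβ : β ≠ 1) (α x : ℝ) (n : ℕ) :
    ∑ k ∈ Finset.range n, gwMean β α x k =
      (x - α / (1 - β)) * ((1 - β ^ n) / (1 - β)) + α / (1 - β) * n := by
  have h1 : 1 - β ≠ 0 := sub_ne_zero.2 hβ.symm
  have hk (k : ℕ) : gwMean β α x k = β ^ k * (x - α / (1 - β)) + α / (1 - β) := by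
    rw [gwMean, geom_sum_eq hβ]
    field_simp
    ring
  simp only [hk, Finset.sum_add_distrib, ← Finset.sum_mul, geom_sum_eq hβ, Finset.sum_const,
    Finset.card_range, nsmul_eq_mul]
  field_simp
  ring

lemma sum_range_gwMean_one (α x : ℝ) (n : ℕ) :
    ∑ k ∈ Finset.range n, gwMean 1 α x k = n * x + α * (n ^ 2 - n) / 2 := by
  induction n with
  | zero => simp
  | succ n ih =>
    rw [Finset.sum_range_succ, ih, gwMean]
    simp only [one_pow, Finset.sum_const, Finset.card_range, nsmul_eq_mul, mul_one]
    push_cast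
    ring

theorem relEnt_upper_bound_general (βA βH αA αH : ℝ)
    (hβA : 0 < βA) (hβH : 0 < βH) (hαA : 0 < αA) (hαH : 0 < αH)
    (ω₀ : ℕ) (n : ℕ) :
    (βA ≠ 1 → relEnt βA αA βH αH ω₀ n ≤
      ((βA * (Real.log (βA / βH) - 1) + βH) / (1 - βA)) * ((ω₀ : ℝ) - αA / (1 - βA))
          * (1 - βA ^ n)
        + (αA * (βA * (Real.log (βA / βH) - 1) + βH) / (βA * (1 - βA))
            + αA * (Real.log (αA * βH / (αH * βA)) - βH / βA) + αH) * (n : ℝ)) ∧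
    (βA = 1 → relEnt βA αA βH αH ω₀ n ≤
      (βH - Real.log βH - 1) * ((αA / 2) * (n : ℝ) ^ 2 + ((ω₀ : ℝ) + αA / 2) * (n : ℝ))
        + (αA * (Real.log (αA * βH / αH) - βH) + αH) * (n : ℝ)) := by
  have h := (relEnt_le_sum_gwMean hβA.le hαA hβH hαH n ω₀).2
  rw [mul_klFun_div hβH.ne', mul_klFun_div hαH.ne'] at h
  have hlog : log (αA * βH / (αH * βA)) = log (αA / αH) - log (βA / βH) := by
    rw [← log_div (by positivity) (by positivity)]
    field_simp
  refine ⟨fun hβ ↦ h.trans_eq ?_, fun hβ ↦ h.trans_eq ?_⟩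
  · have h1 : 1 - βA ≠ 0 := sub_ne_zero.2 (Ne.symm hβ)
    rw [sum_range_gwMean_of_ne_one hβ, hlog]
    generalize log (αA / αH) = a
    generalize log (βA / βH) = b
    field_simp
    ring
  · subst hβ
    rw [mul_one, one_div, log_inv] at hlog
    rw [sum_range_gwMean_one, hlog, one_div, log_inv]
    ring

/-- Closed-form upper bound `E_n^U` for the relative entropy on the class
of strictly positive parameters with `α_H·β_A − α_A·β_H ≠ 0`. -/
theorem relEnt_upper_bound (βA βH αA αH : ℝ)
    (hβA : 0 < βA) (hβH : 0 < βH) (hαA : 0 < αA) (hαH : 0 < αH)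
    (hγ : αH * βA - αA * βH ≠ 0)
    (ω₀ : ℕ) (hω₀ : 1 ≤ ω₀) (n : ℕ) (hn : 1 ≤ n) :
    (βA ≠ 1 → relEnt βA αA βH αH ω₀ n ≤
      ((βA * (Real.log (βA / βH) - 1) + βH) / (1 - βA)) * ((ω₀ : ℝ) - αA / (1 - βA))
          * (1 - βA ^ n)
        + (αA * (βA * (Real.log (βA / βH) - 1) + βH) / (βA * (1 - βA))
            + αA * (Real.log (αA * βH / (αH * βA)) - βH / βA) + αH) * (n : ℝ)) ∧
    (βA = 1 → relEnt βA αA βH αH ω₀ n ≤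
      (βH - Real.log βH - 1) * ((αA / 2) * (n : ℝ) ^ 2 + ((ω₀ : ℝ) + αA / 2) * (n : ℝ))
        + (αA * (Real.log (αA * βH / αH) - βH) + αH) * (n : ℝ)) :=
  relEnt_upper_bound_general βA βH αA αH hβA hβH hαA hαH ω₀ n
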